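/- Let E, F, G be normed L-spaces, ρ : E × F → G an L-bounded bilinear operator, and R : E ⊗_L F → G the associated linear operator. Then R is L-bounded and ‖R_∞‖ = ‖ρ_∞‖, where E ⊗_L F carries the L-norm ‖U‖_L = inf{Σ ‖a_k‖‖u_k‖‖v_k‖ : U = Σ a_k·(u_k ◇ v_k)}. -/

import Mathlib

/-!
`lTensor L R` commutes with the operators `rTensor a` and sends `u ◇ v` to `ρ_∞(u, v)`, so it
maps a representation `U = ∑ a_k · (u_k ◇ v_k)` to `∑ a_k · ρ_∞(u_k, v_k)`. By subadditivity and
contractivity of the `L`-norm on `L ⊗ G`, a bound `C` for `ρ_∞` then gives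
`‖R_∞ U‖ ≤ C ∑ ‖a_k‖ ‖u_k‖ ‖v_k‖`, hence `‖R_∞ U‖ ≤ C ‖U‖_L`; the infimum is over a nonempty set
because `◇ ≠ 0` makes every elementary tensor `ζ ⊗ (x ⊗ y)` a one-term sum. Conversely `u ◇ v` is
its own one-term representation, so `‖u ◇ v‖_L ≤ ‖u‖ ‖v‖` and a bound for `R_∞` restricts to one
for `ρ_∞`.
-/

open TensorProduct

/-- The extended diamond operation `(ξ ⊗ x) ◇ (η ⊗ y) = (ξ ◇ η) ⊗ (x ⊗ y)`. -/
noncomputable def diamondT {L E F : Type*}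
    [AddCommGroup L] [Module ℂ L] [AddCommGroup E] [Module ℂ E]
    [AddCommGroup F] [Module ℂ F]
    (d : L →ₗ[ℂ] L →ₗ[ℂ] L) (u : L ⊗[ℂ] E) (v : L ⊗[ℂ] F) : L ⊗[ℂ] (E ⊗[ℂ] F) :=
  TensorProduct.map (TensorProduct.lift d) LinearMap.id
    (TensorProduct.tensorTensorTensorComm ℂ L E L F (u ⊗ₜ[ℂ] v))

/-- The amplification `ρ_∞(ξ⊗x, η⊗y) = (ξ◇η) ⊗ ρ(x,y)` of a bilinear operator. -/
noncomputable def ampBil {L E F G : Type*}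
    [AddCommGroup L] [Module ℂ L] [AddCommGroup E] [Module ℂ E]
    [AddCommGroup F] [Module ℂ F] [AddCommGroup G] [Module ℂ G]
    (d : L →ₗ[ℂ] L →ₗ[ℂ] L) (ρ : E →ₗ[ℂ] F →ₗ[ℂ] G)
    (u : L ⊗[ℂ] E) (v : L ⊗[ℂ] F) : L ⊗[ℂ] G :=
  TensorProduct.map (TensorProduct.lift d) (TensorProduct.lift ρ)
    (TensorProduct.tensorTensorTensorComm ℂ L E L F (u ⊗ₜ[ℂ] v))

/-- The general `L`-tensor norm on `E ⊗_L F`. -/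
noncomputable def genLNorm {L E F : Type*}
    [NormedAddCommGroup L] [NormedSpace ℂ L] [AddCommGroup E] [Module ℂ E]
    [AddCommGroup F] [Module ℂ F]
    (d : L →ₗ[ℂ] L →ₗ[ℂ] L) (NE : L ⊗[ℂ] E → ℝ) (NF : L ⊗[ℂ] F → ℝ)
    (U : L ⊗[ℂ] (E ⊗[ℂ] F)) : ℝ :=
  sInf {r : ℝ | ∃ (n : ℕ) (a : Fin n → (L →L[ℂ] L))
      (u : Fin n → L ⊗[ℂ] E) (v : Fin n → L ⊗[ℂ] F),
    U = ∑ k, LinearMap.rTensor (E ⊗[ℂ] F) ((a k : L →ₗ[ℂ] L)) (diamondT d (u k) (v k)) ∧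
    r = ∑ k, ‖a k‖ * NE (u k) * NF (v k)}

lemma Real.le_mul_csInf {S : Set ℝ} (hS : S.Nonempty) {x C : ℝ} (hC : 0 ≤ C)
    (h : ∀ r ∈ S, x ≤ C * r) : x ≤ C * sInf S := by
  rw [← smul_eq_mul, ← Real.sInf_smul_of_nonneg hC]
  refine le_csInf (hS.smul_set) ?_
  rintro _ ⟨r, hr, rfl⟩
  exact h r hr

lemma LinearMap.lTensor_rTensor_apply {R M M' A B : Type*} [CommSemiring R]
    [AddCommMonoid M] [Module R M] [AddCommMonoid M'] [Module R M']
    [AddCommMonoid A] [Module R A] [AddCommMonoid B] [Module R B]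
    (g : A →ₗ[R] B) (a : M →ₗ[R] M') (x : M ⊗[R] A) :
    lTensor M' g (rTensor A a x) = rTensor B a (lTensor M g x) := by
  rw [← comp_apply, ← comp_apply, lTensor_comp_rTensor, rTensor_comp_lTensor]

section Algebra

variable {L E F G : Type*} [AddCommGroup L] [Module ℂ L] [AddCommGroup E] [Module ℂ E]
  [AddCommGroup F] [Module ℂ F] [AddCommGroup G] [Module ℂ G]

lemma diamondT_tmul (d : L →ₗ[ℂ] L →ₗ[ℂ] L) (ξ η : L) (x : E) (y : F) :
    diamondT d (ξ ⊗ₜ[ℂ] x) (η ⊗ₜ[ℂ] y) = d ξ η ⊗ₜ[ℂ] (x ⊗ₜ[ℂ] y) := by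
  simp [diamondT]

lemma lTensor_lift_diamondT (d : L →ₗ[ℂ] L →ₗ[ℂ] L) (ρ : E →ₗ[ℂ] F →ₗ[ℂ] G)
    (u : L ⊗[ℂ] E) (v : L ⊗[ℂ] F) :
    LinearMap.lTensor L (lift ρ) (diamondT d u v) = ampBil d ρ u v := by
  rw [diamondT, ampBil, LinearMap.lTensor, ← LinearMap.comp_apply, ← map_comp]
  simp

end Algebra

section Normed

variable {L E F G : Type*} [NormedAddCommGroup L] [NormedSpace ℂ L]
  [AddCommGroup E] [Module ℂ E] [AddCommGroup F] [Module ℂ F] [AddCommGroup G] [Module ℂ G]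

def IsDiamondSum (d : L →ₗ[ℂ] L →ₗ[ℂ] L) (U : L ⊗[ℂ] (E ⊗[ℂ] F)) : Prop :=
  ∃ (n : ℕ) (a : Fin n → (L →L[ℂ] L)) (u : Fin n → L ⊗[ℂ] E) (v : Fin n → L ⊗[ℂ] F),
    U = ∑ k, LinearMap.rTensor (E ⊗[ℂ] F) (a k : L →ₗ[ℂ] L) (diamondT d (u k) (v k))

lemma isDiamondSum_zero (d : L →ₗ[ℂ] L →ₗ[ℂ] L) :
    IsDiamondSum d (0 : L ⊗[ℂ] (E ⊗[ℂ] F)) :=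
  ⟨0, Fin.elim0, Fin.elim0, Fin.elim0, by simp⟩

lemma IsDiamondSum.add {d : L →ₗ[ℂ] L →ₗ[ℂ] L} {U V : L ⊗[ℂ] (E ⊗[ℂ] F)}
    (hU : IsDiamondSum d U) (hV : IsDiamondSum d V) : IsDiamondSum d (U + V) := by
  obtain ⟨n, a, u, v, rfl⟩ := hU
  obtain ⟨m, b, u', v', rfl⟩ := hV
  refine ⟨n + m, Fin.append a b, Fin.append u u', Fin.append v v', ?_⟩
  simp only [Fin.sum_univ_add, Fin.append_left, Fin.append_right]

lemma isDiamondSum_tmul_tmul {d : L →ₗ[ℂ] L →ₗ[ℂ] L} (hd : d ≠ 0) (ζ : L) (x : E) (y : F) :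
    IsDiamondSum d (ζ ⊗ₜ[ℂ] (x ⊗ₜ[ℂ] y)) := by
  obtain ⟨ξ, η, hξη⟩ : ∃ ξ η, d ξ η ≠ 0 := by
    by_contra! h
    exact hd (LinearMap.ext₂ h)
  obtain ⟨f, hf⟩ := SeparatingDual.exists_eq_one (R := ℂ) hξη
  -- the rank-one operator `f(·) ζ` sends `ξ ◇ η` to `ζ`
  refine ⟨1, fun _ => f.smulRight ζ, fun _ => ξ ⊗ₜ[ℂ] x, fun _ => η ⊗ₜ[ℂ] y, ?_⟩
  simp [diamondT_tmul, hf]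

lemma isDiamondSum {d : L →ₗ[ℂ] L →ₗ[ℂ] L} (hd : d ≠ 0) (U : L ⊗[ℂ] (E ⊗[ℂ] F)) :
    IsDiamondSum d U := by
  induction U using TensorProduct.induction_on with
  | zero => exact isDiamondSum_zero d
  | add U V hU hV => exact hU.add hV
  | tmul ζ w =>
    induction w using TensorProduct.induction_on with
    | zero => simpa using isDiamondSum_zero d
    | add w w' hw hw' => simpa [tmul_add] using hw.add hw'
    | tmul x y => exact isDiamondSum_tmul_tmul hd ζ x y

lemma genLNorm_diamondT_le (d : L →ₗ[ℂ] L →ₗ[ℂ] L) {NE : L ⊗[ℂ] E → ℝ} {NF : L ⊗[ℂ] F → ℝ}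
    (hNE : ∀ u, 0 ≤ NE u) (hNF : ∀ v, 0 ≤ NF v) (u : L ⊗[ℂ] E) (v : L ⊗[ℂ] F) :
    genLNorm d NE NF (diamondT d u v) ≤ NE u * NF v := by
  refine csInf_le_of_le ⟨0, ?_⟩
    ⟨1, fun _ => 1, fun _ => u, fun _ => v, by simp [ContinuousLinearMap.one_def], rfl⟩ ?_
  · rintro r ⟨n, a, u', v', -, rfl⟩
    exact Finset.sum_nonneg fun k _ => by have := hNE (u' k); have := hNF (v' k); positivity
  · rw [Fin.sum_univ_one, mul_assoc]
    exact mul_le_of_le_one_left (mul_nonneg (hNE u) (hNF v)) ContinuousLinearMap.norm_id_le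

lemma le_mul_genLNorm_of_forall_ampBil_le {d : L →ₗ[ℂ] L →ₗ[ℂ] L} (hd : d ≠ 0)
    (ρ : E →ₗ[ℂ] F →ₗ[ℂ] G) (NE : L ⊗[ℂ] E → ℝ) (NF : L ⊗[ℂ] F → ℝ) (NG : Seminorm ℂ (L ⊗[ℂ] G))
    (hNGcontr : ∀ (a : L →L[ℂ] L) w,
      NG (LinearMap.rTensor G (a : L →ₗ[ℂ] L) w) ≤ ‖a‖ * NG w)
    {C : ℝ} (hC : 0 ≤ C) (h : ∀ u v, NG (ampBil d ρ u v) ≤ C * (NE u * NF v))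
    (U : L ⊗[ℂ] (E ⊗[ℂ] F)) :
    NG (LinearMap.lTensor L (lift ρ) U) ≤ C * genLNorm d NE NF U := by
  obtain ⟨n, a, u, v, hU⟩ := isDiamondSum hd U
  rw [genLNorm]
  refine Real.le_mul_csInf ?_ hC ?_
  · exact ⟨_, n, a, u, v, hU, rfl⟩
  rintro _ ⟨n, a, u, v, rfl, rfl⟩
  simp only [map_sum, LinearMap.lTensor_rTensor_apply, lTensor_lift_diamondT]
  calc NG (∑ k, LinearMap.rTensor G (a k : L →ₗ[ℂ] L) (ampBil d ρ (u k) (v k)))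
      ≤ ∑ k, NG (LinearMap.rTensor G (a k : L →ₗ[ℂ] L) (ampBil d ρ (u k) (v k))) :=
        Finset.le_sum_of_subadditive NG (map_zero NG).le (map_add_le_add NG) _ _
    _ ≤ ∑ k, ‖a k‖ * (C * (NE (u k) * NF (v k))) :=
        Finset.sum_le_sum fun k _ =>
          (hNGcontr _ _).trans (mul_le_mul_of_nonneg_left (h _ _) (norm_nonneg _))
    _ = C * ∑ k, ‖a k‖ * NE (u k) * NF (v k) := by
        rw [Finset.mul_sum]
        exact Finset.sum_congr rfl fun k _ => by ring

end Normed

theorem associated_operator_L_bounded_general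
    (L E F G : Type*) [NormedAddCommGroup L] [NormedSpace ℂ L] [Nontrivial L]
    [NormedAddCommGroup E] [NormedSpace ℂ E]
    [NormedAddCommGroup F] [NormedSpace ℂ F]
    [NormedAddCommGroup G] [NormedSpace ℂ G]
    (d : L →ₗ[ℂ] L →ₗ[ℂ] L) (hd : ∀ ξ η : L, ‖d ξ η‖ = ‖ξ‖ * ‖η‖)
    (NE : L ⊗[ℂ] E → ℝ) (NF : L ⊗[ℂ] F → ℝ) (NG : L ⊗[ℂ] G → ℝ)
    (hNEadd : ∀ u v, NE (u + v) ≤ NE u + NE v)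
    (hNEsmul : ∀ (c : ℂ) u, NE (c • u) = ‖c‖ * NE u)
    (hNFadd : ∀ u v, NF (u + v) ≤ NF u + NF v)
    (hNFsmul : ∀ (c : ℂ) v, NF (c • v) = ‖c‖ * NF v)
    (hNGadd : ∀ w w', NG (w + w') ≤ NG w + NG w')
    (hNGsmul : ∀ (c : ℂ) w, NG (c • w) = ‖c‖ * NG w)
    (hNGcontr : ∀ (a : L →L[ℂ] L) w,
      NG (LinearMap.rTensor G (a : L →ₗ[ℂ] L) w) ≤ ‖a‖ * NG w)
    (ρ : E →ₗ[ℂ] F →ₗ[ℂ] G) :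
    ∀ C : ℝ, 0 ≤ C →
      ((∀ (u : L ⊗[ℂ] E) (v : L ⊗[ℂ] F), NG (ampBil d ρ u v) ≤ C * (NE u * NF v)) ↔
       (∀ U : L ⊗[ℂ] (E ⊗[ℂ] F),
          NG (LinearMap.lTensor L (TensorProduct.lift ρ) U) ≤ C * genLNorm d NE NF U)) := by
  intro C hC
  have hd0 : d ≠ 0 := by
    obtain ⟨ξ, hξ⟩ := exists_ne (0 : L)
    intro h
    simpa [h, hξ] using hd ξ ξ
  refine ⟨le_mul_genLNorm_of_forall_ampBil_le hd0 ρ NE NF (.of NG hNGadd hNGsmul) hNGcontr hC,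
    fun h u v => ?_⟩
  calc NG (ampBil d ρ u v) = NG (LinearMap.lTensor L (lift ρ) (diamondT d u v)) := by
        rw [lTensor_lift_diamondT]
    _ ≤ C * genLNorm d NE NF (diamondT d u v) := h _
    _ ≤ C * (NE u * NF v) := by
        gcongr
        exact genLNorm_diamondT_le d (apply_nonneg (Seminorm.of NE hNEadd hNEsmul))
          (apply_nonneg (Seminorm.of NF hNFadd hNFsmul)) u v

/-- For an `L`-bounded bilinear operator `ρ : E × F → G`, the associated
linear operator `R : E ⊗_L F → G` is `L`-bounded with `‖R_∞‖ = ‖ρ_∞‖` (stated as: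
`ρ_∞` and `R_∞` have exactly the same bounds). -/
theorem associated_operator_L_bounded
    (L E F G : Type*) [NormedAddCommGroup L] [NormedSpace ℂ L] [Nontrivial L]
    [NormedAddCommGroup E] [NormedSpace ℂ E]
    [NormedAddCommGroup F] [NormedSpace ℂ F]
    [NormedAddCommGroup G] [NormedSpace ℂ G]
    (d : L →ₗ[ℂ] L →ₗ[ℂ] L) (hd : ∀ ξ η : L, ‖d ξ η‖ = ‖ξ‖ * ‖η‖)
    (NE : L ⊗[ℂ] E → ℝ) (NF : L ⊗[ℂ] F → ℝ) (NG : L ⊗[ℂ] G → ℝ)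
    (hNE0 : ∀ u, NE u = 0 ↔ u = 0)
    (hNEadd : ∀ u v, NE (u + v) ≤ NE u + NE v)
    (hNEsmul : ∀ (c : ℂ) u, NE (c • u) = ‖c‖ * NE u)
    (hNEcontr : ∀ (a : L →L[ℂ] L) u,
      NE (LinearMap.rTensor E (a : L →ₗ[ℂ] L) u) ≤ ‖a‖ * NE u)
    (hNEund : ∀ (ξ : L) (x : E), ‖ξ‖ = 1 → NE (ξ ⊗ₜ[ℂ] x) = ‖x‖)
    (hNF0 : ∀ v, NF v = 0 ↔ v = 0)
    (hNFadd : ∀ u v, NF (u + v) ≤ NF u + NF v)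
    (hNFsmul : ∀ (c : ℂ) v, NF (c • v) = ‖c‖ * NF v)
    (hNFcontr : ∀ (a : L →L[ℂ] L) v,
      NF (LinearMap.rTensor F (a : L →ₗ[ℂ] L) v) ≤ ‖a‖ * NF v)
    (hNFund : ∀ (ξ : L) (y : F), ‖ξ‖ = 1 → NF (ξ ⊗ₜ[ℂ] y) = ‖y‖)
    (hNG0 : ∀ w, NG w = 0 ↔ w = 0)
    (hNGadd : ∀ w w', NG (w + w') ≤ NG w + NG w')
    (hNGsmul : ∀ (c : ℂ) w, NG (c • w) = ‖c‖ * NG w)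
    (hNGcontr : ∀ (a : L →L[ℂ] L) w,
      NG (LinearMap.rTensor G (a : L →ₗ[ℂ] L) w) ≤ ‖a‖ * NG w)
    (hNGund : ∀ (ξ : L) (z : G), ‖ξ‖ = 1 → NG (ξ ⊗ₜ[ℂ] z) = ‖z‖)
    (ρ : E →ₗ[ℂ] F →ₗ[ℂ] G)
    (hbdd : ∃ C : ℝ, 0 ≤ C ∧ ∀ (u : L ⊗[ℂ] E) (v : L ⊗[ℂ] F),
      NG (ampBil d ρ u v) ≤ C * (NE u * NF v)) :
    ∀ C : ℝ, 0 ≤ C →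
      ((∀ (u : L ⊗[ℂ] E) (v : L ⊗[ℂ] F), NG (ampBil d ρ u v) ≤ C * (NE u * NF v)) ↔
       (∀ U : L ⊗[ℂ] (E ⊗[ℂ] F),
          NG (LinearMap.lTensor L (TensorProduct.lift ρ) U) ≤ C * genLNorm d NE NF U)) :=
  associated_operator_L_bounded_general L E F G d hd NE NF NG hNEadd hNEsmul hNFadd hNFsmul hNGadd
    hNGsmul hNGcontr ρ
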